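/- arXiv:2304.14793 — 3 statements merged into one kernel-verified Lean document; each statement's English description precedes it below -/
import Mathlib

section
/- Let L be a GNN composed of d ≥ 1 layers applied to colored multigraphs. If colr^d(G)(v) = colr^d(H)(w), then L(G)(v) = L(H)(w). -/
open Classical

/-- The multiset of incoming neighbors of `v` in the multigraph with edge
multiplicity function `E` (with `E w v` the multiplicity of edge `w → v`). -/
def inc {V : Type*} [Fintype V] (E : V → V → ℕ) (v : V) : Multiset V :=
  Finset.univ.val.bind fun w => Multiset.replicate (E w v) w

/-- Cap all multiplicities of a multiset at `c ∈ ℕ∞`. -/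
noncomputable def capM {α : Type*} (c : ℕ∞) (M : Multiset α) : Multiset α :=
  letI := Classical.decEq α
  M.toFinset.val.bind fun x => Multiset.replicate ((min (M.count x : ℕ∞) c).toNat) x

/-- The type of colors obtained after `d` steps of color refinement, starting
from base colors in `Y`: a depth-`d` color is the previous color paired with the
multiset of previous colors of the incoming neighbors. -/
def CRt (Y : Type*) : ℕ → Type _
  | 0 => Y
  | (d+1) => CRt Y d × Multiset (CRt Y d)

/-- `d` steps of color refinement, starting from base coloring `g`. -/
def colr {V : Type*} [Fintype V] {Y : Type*} (E : V → V → ℕ) (g : V → Y) :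
    (d : ℕ) → V → CRt Y d
  | 0 => g
  | (d+1) => fun v => (colr E g d v, (inc E v).map (colr E g d))

/-- `d` steps of `c`-graded color refinement. -/
noncomputable def colrC {V : Type*} [Fintype V] {Y : Type*} (c : ℕ∞) (E : V → V → ℕ)
    (g : V → Y) : (d : ℕ) → V → CRt Y d
  | 0 => g
  | (d+1) => fun v => (colrC c E g d v, capM c ((inc E v).map (colrC c E g d)))

/-- The partition induced by `d` refinement steps is stable at `d`. -/
def stableAt {V : Type*} [Fintype V] {Y : Type*} (E : V → V → ℕ) (g : V → Y) (d : ℕ) : Prop :=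
  ∀ v w : V, colr E g d v = colr E g d w ↔ colr E g (d+1) v = colr E g (d+1) w

/-- The stable coloring number: least depth at which color refinement stabilizes. -/
noncomputable def stableNum {V : Type*} [Fintype V] {Y : Type*} (E : V → V → ℕ) (g : V → Y) : ℕ :=
  sInf { d | stableAt E g d }

/-- The stable coloring `colr^∞`. -/
noncomputable def colrInf {V : Type*} [Fintype V] {Y : Type*} (E : V → V → ℕ) (g : V → Y) :
    V → CRt Y (stableNum E g) :=
  colr E g (stableNum E g)

/-- The depth (number of refinement rounds) corresponding to `d ∈ ℕ∞`:
for `d = ∞` it is the stable coloring number of the graph. -/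
noncomputable def edepth {V : Type*} [Fintype V] {Y : Type*} (E : V → V → ℕ) (g : V → Y)
    (d : ℕ∞) : ℕ :=
  WithTop.untopD (stableNum E g) d

/-- Color refinement with depth `d ∈ ℕ∞` (stable coloring for `d = ∞`). -/
noncomputable def colrE' {V : Type*} [Fintype V] {Y : Type*} (E : V → V → ℕ) (g : V → Y)
    (d : ℕ∞) : V → CRt Y (edepth E g d) :=
  colr E g (edepth E g d)

/-- A substitution choosing one representative per class of the coloring `col`:
`ρ v` is in the class of `v`, and `ρ` is constant on classes. -/
def IsSubstWith {V : Type*} {C : Type*} (col : V → C) (ρ : V → V) : Prop :=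
  (∀ v, col (ρ v) = col v) ∧ ∀ v w, col v = col w → ρ v = ρ w

/-- Node set of the reduction: the chosen representatives. -/
def RNodes {V : Type*} (ρ : V → V) : Type _ := { v : V // ∃ u, ρ u = v }

noncomputable instance {V : Type*} [Fintype V] (ρ : V → V) : Fintype (RNodes ρ) := by
  unfold RNodes; exact Subtype.fintype _

instance {V : Type*} [DecidableEq V] (ρ : V → V) : DecidableEq (RNodes ρ) := by
  unfold RNodes; infer_instance

/-- Edge multiplicities of the reduction: `E'(v → w) = Σ_{v' ∈ [v]} E(v' → w)`. -/
noncomputable def reductE {V : Type*} [Fintype V] {C : Type*} (E : V → V → ℕ) (col : V → C)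
    (ρ : V → V) (a b : RNodes ρ) : ℕ :=
  ∑ v' ∈ Finset.univ.filter (fun v' => col v' = col a.val), E v' b.val

/-- Edge multiplicities of the `c`-graded reduction:
`E'(v → w) = min(Σ_{v' ∈ [v]} min(E(v' → w), c), c)`. -/
noncomputable def reductEC {V : Type*} [Fintype V] {C : Type*} (c : ℕ∞) (E : V → V → ℕ)
    (col : V → C) (ρ : V → V) (a b : RNodes ρ) : ℕ :=
  (min (↑(∑ v' ∈ Finset.univ.filter (fun v' => col v' = col a.val),
      (min (E v' b.val : ℕ∞) c).toNat) : ℕ∞) c).toNat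

/-- Coloring of the reduction: colors are inherited. -/
def reductG {V : Type*} {Y : Type*} (g : V → Y) (ρ : V → V) (a : RNodes ρ) : Y := g a.val

/-- A GNN layer of input dimension `p` and output dimension `q`. -/
structure GNNLayer (p q : ℕ) where
  h : ℕ
  agg : Multiset (Fin p → ℝ) → (Fin h → ℝ)
  comb : (Fin p → ℝ) → (Fin h → ℝ) → (Fin q → ℝ)

/-- The feature map transformer computed by a GNN layer. -/
def GNNLayer.apply {p q : ℕ} (L : GNNLayer p q) {V : Type*} [Fintype V]
    (E : V → V → ℕ) (g : V → Fin p → ℝ) : V → Fin q → ℝ :=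
  fun v => L.comb (g v) (L.agg ((inc E v).map g))

/-- A GNN: a nonempty sequence of layers with matching dimensions. -/
inductive GNN : ℕ → ℕ → Type
  | single : ∀ {p q}, GNNLayer p q → GNN p q
  | cons : ∀ {p r q}, GNNLayer p r → GNN r q → GNN p q

/-- Number of layers of a GNN. -/
def GNN.depth : ∀ {p q}, GNN p q → ℕ
  | _, _, .single _ => 1
  | _, _, .cons _ rest => rest.depth + 1

/-- The feature map transformer computed by a GNN. -/
def GNN.apply {V : Type*} [Fintype V] : ∀ {p q}, GNN p q → (V → V → ℕ) →
    (V → Fin p → ℝ) → V → Fin q → ℝ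
  | _, _, .single L, E, g => L.apply E g
  | _, _, .cons L rest, E, g => rest.apply E (L.apply E g)

/-- A GNN layer has width `c` if its aggregation only depends on multiplicities up to `c`. -/
def GNNLayer.HasWidth {p q : ℕ} (c : ℕ∞) (L : GNNLayer p q) : Prop :=
  ∀ M, L.agg M = L.agg (capM c M)

/-- A GNN has width `c` if all its layers do. -/
def GNN.HasWidth (c : ℕ∞) : ∀ {p q}, GNN p q → Prop
  | _, _, .single L => L.HasWidth c
  | _, _, .cons L rest => L.HasWidth c ∧ rest.HasWidth c

/-!
A layer reads a node only through its color after one refinement round. Refining the output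
of the first layer for `d` rounds is the same as refining the input for `d + 1` rounds and then
collapsing the innermost round with that layer, so by induction on the layers a GNN of depth
`d` is a function of the depth-`d` color.
-/

/-- Replaces the innermost round of a depth-`(d+1)` color by `φ`, giving a depth-`d` color
over the new base type. -/
def CRt.mapBase {Y Y' : Type*} (φ : CRt Y 1 → Y') : (d : ℕ) → CRt Y (d + 1) → CRt Y' d
  | 0, c => φ c
  | d + 1, c => (mapBase φ d c.1, c.2.map (mapBase φ d))

theorem colr_eq_mapBase_comp {V : Type*} [Fintype V] {Y Y' : Type*} (E : V → V → ℕ)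
    (g : V → Y) (φ : CRt Y 1 → Y') :
    ∀ d, colr E (φ ∘ colr E g 1) d = CRt.mapBase φ d ∘ colr E g (d + 1)
  | 0 => rfl
  | d + 1 => by
    funext v
    change (colr E _ d v, (inc E v).map (colr E _ d)) =
      (CRt.mapBase φ d (colr E g (d + 1) v), ((inc E v).map (colr E g (d + 1))).map _)
    rw [colr_eq_mapBase_comp E g φ d, Multiset.map_map]
    rfl

def GNNLayer.evalColor {p q : ℕ} (L : GNNLayer p q) (c : CRt (Fin p → ℝ) 1) : Fin q → ℝ :=
  L.comb c.1 (L.agg c.2)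

theorem GNNLayer.apply_eq_evalColor_comp {p q : ℕ} (L : GNNLayer p q) {V : Type*} [Fintype V]
    (E : V → V → ℕ) (g : V → Fin p → ℝ) : L.apply E g = L.evalColor ∘ colr E g 1 :=
  rfl

def GNN.evalColor : ∀ {p q} (L : GNN p q), CRt (Fin p → ℝ) L.depth → Fin q → ℝ
  | _, _, .single L => L.evalColor
  | _, _, .cons L rest => rest.evalColor ∘ CRt.mapBase L.evalColor rest.depth

theorem GNN.apply_eq_evalColor_comp {V : Type*} [Fintype V] (E : V → V → ℕ) :
    ∀ {p q} (L : GNN p q) (g : V → Fin p → ℝ), L.apply E g = L.evalColor ∘ colr E g L.depth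
  | _, _, .single L, g => L.apply_eq_evalColor_comp E g
  | _, _, .cons L rest, g => by
    change rest.apply E (L.apply E g) = _
    rw [rest.apply_eq_evalColor_comp, L.apply_eq_evalColor_comp, colr_eq_mapBase_comp]
    rfl

theorem gnn_of_colr_eq_general {V W : Type*} [Fintype V] [Fintype W] {p q : ℕ}
    (EG : V → V → ℕ) (g : V → Fin p → ℝ) (EH : W → W → ℕ) (h : W → Fin p → ℝ)
    (v : V) (w : W) (d : ℕ) (L : GNN p q) (hL : L.depth = d)
    (hc : colr EG g d v = colr EH h d w) :
    L.apply EG g v = L.apply EH h w := by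
  subst hL
  rw [L.apply_eq_evalColor_comp EG, L.apply_eq_evalColor_comp EH]
  exact congrArg L.evalColor hc

/-- `d` refinement steps determine the output of any `d`-layer GNN. -/
theorem gnn_of_colr_eq {V W : Type*} [Fintype V] [Fintype W] {p q : ℕ}
    (EG : V → V → ℕ) (g : V → Fin p → ℝ) (EH : W → W → ℕ) (h : W → Fin p → ℝ)
    (v : V) (w : W) (d : ℕ) (hd : 1 ≤ d) (L : GNN p q) (hL : L.depth = d)
    (hc : colr EG g d v = colr EH h d w) :
    L.apply EG g v = L.apply EH h w :=
  gnn_of_colr_eq_general EG g EH h v w d L hL hc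
end

section
/- If d ∈ ℕ is greater than or equal to the stable coloring number of G, then any two d-reducts of G are isomorphic as colored multigraphs. -/
open Classical

/-! Two `d`-reducts are isomorphic via `a ↦ ρ₂ a`, the representative of the same class. Once
refinement is stable at depth `d`, the `d`-coloring is equitable: the number of in-neighbours a
node has in a given class depends only on the node's own class. So the reduct's edge
multiplicities depend only on the classes of their endpoints. Stability at depth
`d ≥ stableNum` holds because stability propagates upwards, and a stable depth exists because the
number of colors cannot grow forever. -/

open Function

theorem Multiset.map_eq_map_of_factorsThrough {α β γ : Type*} {f : α → β} {h : α → γ}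
    (hf : FactorsThrough h f) {M N : Multiset α} (hMN : M.map f = N.map f) :
    M.map h = N.map h := by
  rcases M.empty_or_exists_mem with rfl | ⟨x, -⟩
  · rw [Multiset.map_zero, eq_comm, Multiset.map_eq_zero] at hMN
    rw [hMN, Multiset.map_zero]
  · have hfactor : ∀ K : Multiset α, K.map h = (K.map f).map (extend f h fun _ => h x) :=
      fun K => by
        rw [Multiset.map_map]
        exact Multiset.map_congr rfl fun y _ => (hf.extend_apply _ y).symm
    rw [hfactor, hMN, ← hfactor]

section ColorRefinement

variable {V Y : Type*} [Fintype V] (E : V → V → ℕ) (g : V → Y)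

theorem colr_eq_of_colr_succ_eq {d : ℕ} {v w : V}
    (h : colr E g (d+1) v = colr E g (d+1) w) : colr E g d v = colr E g d w :=
  congrArg Prod.fst h

theorem inc_map_colr_eq_of_colr_succ_eq {d : ℕ} {v w : V}
    (h : colr E g (d+1) v = colr E g (d+1) w) :
    (inc E v).map (colr E g d) = (inc E w).map (colr E g d) :=
  congrArg Prod.snd h

theorem base_eq_of_colr_eq {d : ℕ} {v w : V}
    (h : colr E g d v = colr E g d w) : g v = g w := by
  induction d with
  | zero => exact h
  | succ d ih => exact ih (colr_eq_of_colr_succ_eq E g h)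

theorem stableAt_succ {d : ℕ} (h : stableAt E g d) : stableAt E g (d+1) := fun _ _ =>
  ⟨fun hvw => Prod.ext hvw <| Multiset.map_eq_map_of_factorsThrough (fun x y => (h x y).mp)
      (inc_map_colr_eq_of_colr_succ_eq E g hvw),
    colr_eq_of_colr_succ_eq E g⟩

theorem range_colr_eq_image_fst (d : ℕ) :
    Set.range (colr E g d) = Prod.fst '' Set.range (colr E g (d+1)) := by
  ext x
  constructor
  · rintro ⟨v, rfl⟩
    exact ⟨colr E g (d+1) v, ⟨v, rfl⟩, rfl⟩
  · rintro ⟨_, ⟨v, rfl⟩, rfl⟩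
    exact ⟨v, rfl⟩

theorem stableAt_of_ncard_range_colr_succ_le {d : ℕ}
    (h : (Set.range (colr E g (d+1))).ncard ≤ (Set.range (colr E g d)).ncard) :
    stableAt E g d := by
  rw [range_colr_eq_image_fst E g d] at h
  have hinj := Set.injOn_of_ncard_image_eq
    (le_antisymm (Set.ncard_image_le (Set.finite_range _)) h) (Set.finite_range _)
  exact fun v w =>
    ⟨fun hvw => hinj (Set.mem_range_self v) (Set.mem_range_self w) hvw,
      colr_eq_of_colr_succ_eq E g⟩

theorem exists_stableAt : ∃ d, stableAt E g d := by
  by_contra! hunstable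
  have hmono : StrictMono fun d => (Set.range (colr E g d)).ncard := strictMono_nat_of_lt_succ
    fun d => not_le.mp fun h => hunstable d (stableAt_of_ncard_range_colr_succ_le E g h)
  have hbound : (Set.range (colr E g (Fintype.card V + 1))).ncard ≤ Fintype.card V := by
    rw [← Nat.card_eq_fintype_card, ← Set.ncard_univ, ← Set.image_univ]
    exact Set.ncard_image_le Set.finite_univ
  exact (Nat.lt_succ_self _).not_ge ((hmono.id_le _).trans hbound)

theorem stableAt_of_stableNum_le {d : ℕ} (hd : stableNum E g ≤ d) : stableAt E g d := by
  induction d, hd using Nat.le_induction with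
  | base => exact Nat.sInf_mem (exists_stableAt E g)
  | succ d _ ih => exact stableAt_succ E g ih

end ColorRefinement

section Reduct

variable {V C : Type*} [Fintype V]

def IsEquitable (E : V → V → ℕ) (col : V → C) : Prop :=
  ∀ w w', col w = col w' → ∀ κ,
    ∑ v' ∈ Finset.univ.filter (fun v' => col v' = κ), E v' w =
      ∑ v' ∈ Finset.univ.filter (fun v' => col v' = κ), E v' w'

theorem sum_filter_eq_count_inc_map (E : V → V → ℕ) (col : V → C) (w : V) (κ : C) :
    ∑ v' ∈ Finset.univ.filter (fun v' => col v' = κ), E v' w = ((inc E w).map col).count κ := by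
  rw [Finset.sum_filter]
  simp only [inc, Multiset.map_bind, Multiset.map_replicate, Multiset.count_bind,
    Multiset.count_replicate]
  rfl

theorem isEquitable_colr_of_stableAt {Y : Type*} {E : V → V → ℕ} {g : V → Y} {d : ℕ}
    (h : stableAt E g d) : IsEquitable E (colr E g d) := fun w w' hww' κ => by
  rw [sum_filter_eq_count_inc_map, sum_filter_eq_count_inc_map,
    inc_map_colr_eq_of_colr_succ_eq E g ((h w w').mp hww')]

theorem reductE_eq_of_isEquitable {E : V → V → ℕ} {col : V → C} (hE : IsEquitable E col)
    {ρ ρ' : V → V} {a b : RNodes ρ} {a' b' : RNodes ρ'} (ha : col a'.val = col a.val)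
    (hb : col b'.val = col b.val) :
    reductE E col ρ' a' b' = reductE E col ρ a b := by
  unfold reductE
  rw [ha]
  exact hE _ _ hb _

end Reduct

namespace IsSubstWith

variable {V C : Type*} {col : V → C} {ρ₁ ρ₂ : V → V}

theorem apply_apply (h₁ : IsSubstWith col ρ₁) (h₂ : IsSubstWith col ρ₂) (v : V) :
    ρ₁ (ρ₂ v) = ρ₁ v :=
  h₁.2 _ _ (h₂.1 v)

def rnodesEquiv (h₁ : IsSubstWith col ρ₁) (h₂ : IsSubstWith col ρ₂) : RNodes ρ₁ ≃ RNodes ρ₂ where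
  toFun a := ⟨ρ₂ a.val, a.val, rfl⟩
  invFun b := ⟨ρ₁ b.val, b.val, rfl⟩
  left_inv := by
    rintro ⟨_, u, rfl⟩
    exact Subtype.ext ((h₁.apply_apply h₂ _).trans (h₁.apply_apply h₁ u))
  right_inv := by
    rintro ⟨_, u, rfl⟩
    exact Subtype.ext ((h₂.apply_apply h₁ _).trans (h₂.apply_apply h₂ u))

theorem col_rnodesEquiv (h₁ : IsSubstWith col ρ₁) (h₂ : IsSubstWith col ρ₂) (a : RNodes ρ₁) :
    col (h₁.rnodesEquiv h₂ a).val = col a.val :=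
  h₂.1 a.val

end IsSubstWith

theorem reducts_iso_of_stable_general {V Y : Type*} [Fintype V] (E : V → V → ℕ)
    (g : V → Y) (d : ℕ) (hd : stableNum E g ≤ d) (ρ₁ ρ₂ : V → V)
    (h1 : IsSubstWith (colr E g d) ρ₁) (h2 : IsSubstWith (colr E g d) ρ₂) :
    ∃ f : RNodes ρ₁ ≃ RNodes ρ₂,
      (∀ a, g (f a).val = g a.val) ∧
      ∀ a b, reductE E (colr E g d) ρ₂ (f a) (f b) = reductE E (colr E g d) ρ₁ a b := by
  have hequitable := isEquitable_colr_of_stableAt (stableAt_of_stableNum_le E g hd)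
  have hcol := h1.col_rnodesEquiv h2
  exact ⟨h1.rnodesEquiv h2, fun a => base_eq_of_colr_eq E g (hcol a),
    fun a b => reductE_eq_of_isEquitable hequitable (hcol a) (hcol b)⟩

/-- if `d` is at least the stable coloring number, any two
`d`-reducts of `G` are isomorphic as colored multigraphs. -/
theorem reducts_iso_of_stable {V Y : Type*} [Fintype V] [DecidableEq V] (E : V → V → ℕ)
    (g : V → Y) (d : ℕ) (hd : stableNum E g ≤ d) (ρ₁ ρ₂ : V → V)
    (h1 : IsSubstWith (colr E g d) ρ₁) (h2 : IsSubstWith (colr E g d) ρ₂) :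
    ∃ f : RNodes ρ₁ ≃ RNodes ρ₂,
      (∀ a, g (f a).val = g a.val) ∧
      ∀ a b, reductE E (colr E g d) ρ₂ (f a) (f b) = reductE E (colr E g d) ρ₁ a b :=
  reducts_iso_of_stable_general E g d hd ρ₁ ρ₂ h1 h2
end

section
/- Let L = (agg, comb) be a GNN layer of width c, i.e., agg(M) = agg(⌊M⌋_c) for every finite multiset M. If one step of c-graded color refinement assigns equal colors to v ∈ G and w ∈ H (colr_c(G)(v) = colr_c(H)(w)), then L(G)(v) = L(H)(w). Consequently, a GNN of at most d layers all of width c satisfies L(G)(v) = L(H)(w) whenever colr_c^d(G)(v) = colr_c^d(H)(w). -/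
open Classical

/-! A width-`c` layer reads only the capped neighbour multiset, which is exactly what one graded
refinement step records. For deeper networks, the depth-`d` graded colour of a layer's output is a
function of the depth-`(d + 1)` graded colour of its input: capping commutes with taking images up
to a final cap, `capM c ((capM c M).map f) = capM c (M.map f)`, because
`min (∑ i, aᵢ) c = min (∑ i, min aᵢ c) c`. -/

lemma count_capM {α : Type*} [DecidableEq α] (c : ℕ∞) (M : Multiset α) (x : α) :
    (capM c M).count x = (min (M.count x : ℕ∞) c).toNat := by
  obtain rfl : ‹DecidableEq α› = Classical.decEq α := Subsingleton.elim _ _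
  rw [capM, Multiset.count_bind, ← Finset.sum_eq_multiset_sum]
  simp only [Multiset.count_replicate]
  rw [Finset.sum_ite_eq']
  by_cases hx : x ∈ M <;> simp [hx]

lemma capM_le {α : Type*} (c : ℕ∞) (M : Multiset α) : capM c M ≤ M := by
  classical
  refine Multiset.le_iff_count.2 fun x => ?_
  rw [count_capM]
  exact ENat.toNat_le_of_le_natCast (min_le_left _ _)

lemma min_count_capM {α : Type*} [DecidableEq α] (c : ℕ∞) (M : Multiset α) (x : α) :
    min ((capM c M).count x : ℕ∞) c = min (M.count x : ℕ∞) c := by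
  rw [count_capM, ENat.natCast_toNat (min_lt_of_left_lt (ENat.natCast_lt_top _)).ne, min_assoc,
    min_self]

lemma ENat.min_sum_min_eq {ι : Type*} (s : Finset ι) (f : ι → ℕ∞) (c : ℕ∞) :
    min (∑ i ∈ s, min (f i) c) c = min (∑ i ∈ s, f i) c := by
  by_cases hsmall : ∀ i ∈ s, f i ≤ c
  · rw [Finset.sum_congr rfl fun i hi => min_eq_left (hsmall i hi)]
  · push Not at hsmall
    obtain ⟨i, hi, hci⟩ := hsmall
    have hle : ∀ g : ι → ℕ∞, c ≤ g i → c ≤ ∑ j ∈ s, g j := fun g hg =>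
      hg.trans (Finset.single_le_sum (fun _ _ => zero_le) hi)
    rw [min_eq_right (hle _ (le_min hci.le le_rfl)), min_eq_right (hle _ hci.le)]

lemma Multiset.count_map_eq_sum_of_subset {α β : Type*} [DecidableEq α] [DecidableEq β]
    (f : α → β) {N : Multiset α} {s : Finset α} (hN : N.toFinset ⊆ s) (y : β) :
    (N.map f).count y = ∑ x ∈ s with y = f x, N.count x := by
  rw [Multiset.count_map, ← Multiset.sum_count_eq_card (s := s)
    fun a ha => hN (Multiset.mem_toFinset.2 (Multiset.mem_of_mem_filter ha)), Finset.sum_filter]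
  simp only [Multiset.count_filter]

lemma capM_map_capM {α β : Type*} (c : ℕ∞) (f : α → β) (M : Multiset α) :
    capM c ((capM c M).map f) = capM c (M.map f) := by
  classical
  ext y
  rw [count_capM, count_capM,
    Multiset.count_map_eq_sum_of_subset f
      (Multiset.toFinset_subset.2 (Multiset.subset_of_le (capM_le c M))),
    Multiset.count_map_eq_sum_of_subset f subset_rfl]
  push_cast
  rw [← ENat.min_sum_min_eq, ← ENat.min_sum_min_eq _ (fun x => (M.count x : ℕ∞))]
  simp only [min_count_capM]

noncomputable def GNNLayer.liftColor {p q : ℕ} (L : GNNLayer p q) (c : ℕ∞) :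
    (d : ℕ) → CRt (Fin p → ℝ) (d + 1) → CRt (Fin q → ℝ) d
  | 0, (x, M) => L.comb x (L.agg M)
  | d + 1, (x, M) => (L.liftColor c d x, capM c (M.map (L.liftColor c d)))

theorem GNNLayer.colrC_apply_eq_liftColor {p q : ℕ} {c : ℕ∞} {L : GNNLayer p q}
    (hL : L.HasWidth c) {V : Type*} [Fintype V] (E : V → V → ℕ) (g : V → Fin p → ℝ) :
    ∀ (d : ℕ) (v : V), colrC c E (L.apply E g) d v = L.liftColor c d (colrC c E g (d + 1) v)
  | 0, v => congrArg (L.comb (g v)) (hL _)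
  | d + 1, v => by
    refine Prod.ext (colrC_apply_eq_liftColor hL E g d v) ?_
    change capM c ((inc E v).map (colrC c E (L.apply E g) d))
      = capM c ((capM c ((inc E v).map (colrC c E g (d + 1)))).map (L.liftColor c d))
    rw [capM_map_capM, Multiset.map_map]
    exact congrArg (capM c) <|
      Multiset.map_congr rfl fun u _ => colrC_apply_eq_liftColor hL E g d u

theorem colrC_eq_of_le {V W Y : Type*} [Fintype V] [Fintype W] {c : ℕ∞}
    {EG : V → V → ℕ} {g : V → Y} {EH : W → W → ℕ} {h : W → Y} {v : V} {w : W} {e d : ℕ}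
    (hed : e ≤ d) (heq : colrC c EG g d v = colrC c EH h d w) :
    colrC c EG g e v = colrC c EH h e w := by
  induction d, hed using Nat.le_induction with
  | base => exact heq
  | succ d _ ih => exact ih (congrArg Prod.fst heq)

theorem GNNLayer.apply_eq_of_colrC_eq {V W : Type*} [Fintype V] [Fintype W] {p q : ℕ}
    {c : ℕ∞} {L : GNNLayer p q} (hL : L.HasWidth c) {EG : V → V → ℕ} {g : V → Fin p → ℝ}
    {EH : W → W → ℕ} {h : W → Fin p → ℝ} {v : V} {w : W}
    (heq : colrC c EG g 1 v = colrC c EH h 1 w) :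
    L.apply EG g v = L.apply EH h w :=
  (L.colrC_apply_eq_liftColor hL EG g 0 v).trans
    (heq ▸ (L.colrC_apply_eq_liftColor hL EH h 0 w).symm)

theorem GNN.apply_eq_of_colrC_eq {q : ℕ} {c : ℕ∞} {V W : Type*} [Fintype V] [Fintype W]
    {EG : V → V → ℕ} {EH : W → W → ℕ} {v : V} {w : W} :
    ∀ {p : ℕ} (L : GNN p q), L.HasWidth c → ∀ {g : V → Fin p → ℝ} {h : W → Fin p → ℝ} {d : ℕ},
      L.depth ≤ d → colrC c EG g d v = colrC c EH h d w → L.apply EG g v = L.apply EH h w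
  | _, .single L, hL, _, _, _, hd, heq => L.apply_eq_of_colrC_eq hL (colrC_eq_of_le hd heq)
  | _, .cons L rest, hW, g, h, _, hd, heq => by
    have heq' : colrC c EG g (rest.depth + 1) v = colrC c EH h (rest.depth + 1) w :=
      colrC_eq_of_le hd heq
    refine GNN.apply_eq_of_colrC_eq rest hW.2 le_rfl ?_
    rw [L.colrC_apply_eq_liftColor hW.1, L.colrC_apply_eq_liftColor hW.1, heq']

/-- a width-`c` layer cannot distinguish nodes with equal one-step
`c`-graded refinement colors; consequently a GNN of at most `d` layers, all of
width `c`, cannot distinguish nodes with equal `colr_c^d` colors. -/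
theorem width_layer_and_gnn_of_gradedColr_eq {V W : Type*} [Fintype V] [Fintype W]
    {p q : ℕ} (c : ℕ∞) (EG : V → V → ℕ) (g : V → Fin p → ℝ)
    (EH : W → W → ℕ) (h : W → Fin p → ℝ) (v : V) (w : W) :
    (∀ L : GNNLayer p q, L.HasWidth c → colrC c EG g 1 v = colrC c EH h 1 w →
      L.apply EG g v = L.apply EH h w) ∧
    (∀ (d : ℕ) (L : GNN p q), L.HasWidth c → L.depth ≤ d →
      colrC c EG g d v = colrC c EH h d w → L.apply EG g v = L.apply EH h w) :=
  ⟨fun _ hL heq => GNNLayer.apply_eq_of_colrC_eq hL heq,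
    fun _ L hL hd heq => L.apply_eq_of_colrC_eq hL hd heq⟩
end
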